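/- Let σ > 0, l > 0, ξ ∈ ℝ, k ∈ ℤ, and p ∈ ℕ. Define a₂ = ξ − 2·i·k·π·σ²/l ∈ ℂ, z : ℝ → ℂ by z(u) = (√2/σ)·(u − a₂), and η : ℝ → ℂ by η(u) = exp(−z(u)²/4)·He_p(z(u)) (He_p evaluated at the complex argument z(u)). Then η is twice differentiable and, for all real u, (σ²/2)·η″(u) + (−(2·π·i·k·u)/l − ((u−ξ)² − σ²)/(2σ²))·η(u) = α·η(u), where α = −p − 2π²k²σ²/l² − 2πikξ/l. That is, η is an eigenfunction of the local linearized operator L^k_{loc,1} with eigenvalue α_{k,p} = −p − 2π²k²σ²/l² − 2πikξ/l. -/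

import Mathlib

open Polynomial Complex

/-!
The Hermite function `h(x) = exp (-x² / 4) He_p(x)` satisfies `h'' = (x² / 4 - 1 / 2 - p) h` by
Hermite's equation `He_p'' = x He_p' - p He_p`, and this holds on all of `ℂ`. Since
`η(u) = h(c (u - a₂))` with `c² = 2 / σ²`, we get `(σ² / 2) η'' = ((u - a₂)² / (2σ²) - 1 / 2 - p) η`,
and the complex shift `a₂ = ξ - iκσ²`, `κ = 2πk / l`, is exactly the one completing the square
against the potential `-iκu - ((u - ξ)² - σ²) / (2σ²)`, leaving the constant `α`.
-/

namespace Polynomial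

theorem derivative_hermite_succ (n : ℕ) :
    derivative (hermite (n + 1)) = (n + 1 : ℤ[X]) * hermite n := by
  induction n with
  | zero => simp
  | succ n ih =>
    rw [hermite_succ (n + 1), derivative_sub, derivative_mul, derivative_X, ih, derivative_mul,
      show derivative (hermite n) = X * hermite n - hermite (n + 1) by rw [hermite_succ]; ring]
    simp only [derivative_add, derivative_natCast, derivative_one]
    push_cast
    ring

theorem derivative_derivative_hermite (n : ℕ) :
    derivative (derivative (hermite n)) = X * derivative (hermite n) - (n : ℤ[X]) * hermite n := by
  cases n with
  | zero => simp
  | succ n =>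
    rw [derivative_hermite_succ, derivative_mul,
      show derivative (hermite n) = X * hermite n - hermite (n + 1) by rw [hermite_succ]; ring]
    simp only [derivative_add, derivative_natCast, derivative_one]
    push_cast
    ring

end Polynomial

theorem HasDerivAt.cexp_neg_sq_div_four_mul {f : ℂ → ℂ} {f' x : ℂ} (hf : HasDerivAt f f' x) :
    HasDerivAt (fun x => cexp (-x ^ 2 / 4) * f x) (cexp (-x ^ 2 / 4) * (f' - x / 2 * f x)) x := by
  have hgauss : HasDerivAt (fun x : ℂ => -x ^ 2 / 4) (-x / 2) x :=
    (((hasDerivAt_pow 2 x).neg).div_const 4).congr_deriv (by ring)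
  exact (hgauss.cexp.mul hf).congr_deriv (by ring)

noncomputable def hermiteFunction (n : ℕ) (x : ℂ) : ℂ :=
  cexp (-x ^ 2 / 4) * aeval x (hermite n)

noncomputable def hermiteFunctionDeriv (n : ℕ) (x : ℂ) : ℂ :=
  cexp (-x ^ 2 / 4) * (aeval x (derivative (hermite n)) - x / 2 * aeval x (hermite n))

theorem hasDerivAt_hermiteFunction (n : ℕ) (x : ℂ) :
    HasDerivAt (hermiteFunction n) (hermiteFunctionDeriv n x) x :=
  ((hermite n).hasDerivAt_aeval x).cexp_neg_sq_div_four_mul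

theorem hasDerivAt_hermiteFunctionDeriv (n : ℕ) (x : ℂ) :
    HasDerivAt (hermiteFunctionDeriv n) ((x ^ 2 / 4 - 1 / 2 - n) * hermiteFunction n x) x := by
  have hinner : HasDerivAt (fun x => aeval x (derivative (hermite n)) - x / 2 * aeval x (hermite n))
      (aeval x (derivative (derivative (hermite n)))
        - (1 / 2 * aeval x (hermite n) + x / 2 * aeval x (derivative (hermite n)))) x :=
    ((derivative (hermite n)).hasDerivAt_aeval x).sub
      (((hasDerivAt_id x).div_const 2).mul ((hermite n).hasDerivAt_aeval x))
  refine hinner.cexp_neg_sq_div_four_mul.congr_deriv ?_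
  simp only [hermiteFunction, derivative_derivative_hermite, map_sub, map_mul, aeval_X,
    map_natCast]
  ring

theorem HasDerivAt.comp_ofReal_affine {f f' : ℂ → ℂ} (hf : ∀ w, HasDerivAt f (f' w) w)
    (c a : ℂ) (u : ℝ) :
    HasDerivAt (fun u : ℝ => f (c * (u - a))) (c * f' (c * (u - a))) u := by
  have haff : HasDerivAt (fun v : ℂ => c * (v - a)) c u := by
    simpa using ((hasDerivAt_id (u : ℂ)).sub_const a).const_mul c
  simpa [mul_comm] using ((hf _).comp (u : ℂ) haff).comp_ofReal

theorem sq_sub_div_add_potential_eq (σ κ ξ u : ℂ) (hσ : σ ≠ 0) :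
    (u - (ξ - I * κ * σ ^ 2)) ^ 2 / (2 * σ ^ 2) - 1 / 2
      + (-(I * κ * u) - ((u - ξ) ^ 2 - σ ^ 2) / (2 * σ ^ 2)) = -(κ ^ 2 * σ ^ 2 / 2) - I * κ * ξ := by
  field_simp
  linear_combination κ ^ 2 * σ ^ 4 * I_sq

theorem sqrt_two_div_sq (σ : ℝ) : ((Real.sqrt 2 : ℂ) / σ) ^ 2 = 2 / σ ^ 2 := by
  rw [div_pow, ← ofReal_pow, Real.sq_sqrt zero_le_two, ofReal_ofNat]

theorem czirok_local_operator_eigenfunction_general (σ l ξ : ℝ) (hσ : 0 < σ)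
    (k : ℤ) (p : ℕ)
    (a₂ : ℂ) (ha₂ : a₂ = (ξ : ℂ) - 2 * Complex.I * (k : ℂ) * (Real.pi : ℂ) * (σ : ℂ) ^ 2 / (l : ℂ))
    (z : ℝ → ℂ) (hz : ∀ u : ℝ, z u = ((Real.sqrt 2 : ℂ) / (σ : ℂ)) * ((u : ℂ) - a₂))
    (η : ℝ → ℂ) (hη : ∀ u : ℝ, η u = Complex.exp (-(z u) ^ 2 / 4) * aeval (z u) (hermite p))
    (α : ℂ) (hα : α = -(p : ℂ) - 2 * (Real.pi : ℂ) ^ 2 * (k : ℂ) ^ 2 * (σ : ℂ) ^ 2 / (l : ℂ) ^ 2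
      - 2 * (Real.pi : ℂ) * Complex.I * (k : ℂ) * (ξ : ℂ) / (l : ℂ)) :
    Differentiable ℝ η ∧ Differentiable ℝ (deriv η) ∧
    ∀ u : ℝ,
      ((σ : ℂ) ^ 2 / 2) * deriv (deriv η) u +
        (-(2 * (Real.pi : ℂ) * Complex.I * (k : ℂ) * (u : ℂ)) / (l : ℂ) -
          (((u : ℂ) - (ξ : ℂ)) ^ 2 - (σ : ℂ) ^ 2) / (2 * (σ : ℂ) ^ 2)) * η u =
      α * η u := by
  set c : ℂ := (Real.sqrt 2 : ℂ) / σ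
  have hη_eq : η = fun u : ℝ => hermiteFunction p (c * (u - a₂)) :=
    funext fun u => by rw [hη, hz]; rfl
  have hη' (u : ℝ) : HasDerivAt η (c * hermiteFunctionDeriv p (c * (u - a₂))) u :=
    hη_eq ▸ HasDerivAt.comp_ofReal_affine (hasDerivAt_hermiteFunction p) c a₂ u
  have hη'' (u : ℝ) : HasDerivAt (deriv η)
      (c * (c * (((c * (u - a₂)) ^ 2 / 4 - 1 / 2 - p) * hermiteFunction p (c * (u - a₂))))) u := by
    rw [show deriv η = _ from funext fun u => (hη' u).deriv]
    exact (HasDerivAt.comp_ofReal_affine (hasDerivAt_hermiteFunctionDeriv p) c a₂ u).const_mul c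
  refine ⟨fun u => (hη' u).differentiableAt, fun u => (hη'' u).differentiableAt, fun u => ?_⟩
  have hσ0 : (σ : ℂ) ≠ 0 := by exact_mod_cast hσ.ne'
  have hc : c ^ 2 = 2 / σ ^ 2 := sqrt_two_div_sq σ
  have hσc : (σ : ℂ) ^ 2 / 2 * c ^ 2 = 1 := by rw [hc]; field_simp
  have hsq : (u - a₂) ^ 2 / (2 * σ ^ 2) - 1 / 2 + (-(2 * Real.pi * I * k * u) / l -
      ((u - ξ) ^ 2 - σ ^ 2) / (2 * σ ^ 2)) = α + p := by
    rw [ha₂, hα]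
    linear_combination sq_sub_div_add_potential_eq σ (2 * Real.pi * k / l) ξ u hσ0
  rw [(hη'' u).deriv, hη_eq]
  linear_combination hermiteFunction p (c * (u - a₂)) *
    ((c ^ 2 * (u - a₂) ^ 2 / 4 - 1 / 2 - p) * hσc + (u - a₂) ^ 2 / 4 * hc + hsq)

/-- eigenfunctions of the local linearized operator `L^k_{loc,1}` of the
kinetic Czirók model. With `a₂ = ξ − 2ikπσ²/l`, `z(u) = (√2/σ)(u − a₂)` and
`η(u) = exp(−z(u)²/4)·He_p(z(u))`, the function `η` is twice differentiable and
satisfies `(σ²/2)·η″(u) + (−2πiku/l − ((u−ξ)² − σ²)/(2σ²))·η(u) = α_{k,p}·η(u)` with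
`α_{k,p} = −p − 2π²k²σ²/l² − 2πikξ/l`. -/
theorem czirok_local_operator_eigenfunction (σ l ξ : ℝ) (hσ : 0 < σ) (hl : 0 < l)
    (k : ℤ) (p : ℕ)
    (a₂ : ℂ) (ha₂ : a₂ = (ξ : ℂ) - 2 * Complex.I * (k : ℂ) * (Real.pi : ℂ) * (σ : ℂ) ^ 2 / (l : ℂ))
    (z : ℝ → ℂ) (hz : ∀ u : ℝ, z u = ((Real.sqrt 2 : ℂ) / (σ : ℂ)) * ((u : ℂ) - a₂))
    (η : ℝ → ℂ) (hη : ∀ u : ℝ, η u = Complex.exp (-(z u) ^ 2 / 4) * aeval (z u) (hermite p))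
    (α : ℂ) (hα : α = -(p : ℂ) - 2 * (Real.pi : ℂ) ^ 2 * (k : ℂ) ^ 2 * (σ : ℂ) ^ 2 / (l : ℂ) ^ 2
      - 2 * (Real.pi : ℂ) * Complex.I * (k : ℂ) * (ξ : ℂ) / (l : ℂ)) :
    Differentiable ℝ η ∧ Differentiable ℝ (deriv η) ∧
    ∀ u : ℝ,
      ((σ : ℂ) ^ 2 / 2) * deriv (deriv η) u +
        (-(2 * (Real.pi : ℂ) * Complex.I * (k : ℂ) * (u : ℂ)) / (l : ℂ) -
          (((u : ℂ) - (ξ : ℂ)) ^ 2 - (σ : ℂ) ^ 2) / (2 * (σ : ℂ) ^ 2)) * η u =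
      α * η u :=
  czirok_local_operator_eigenfunction_general σ l ξ hσ k p a₂ ha₂ z hz η hη α hα
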